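/- Fix a boundary condition τ ∈ {−1,1}^{Z^d} and let μ be any weak limit point of the finite-volume stationary measures ν_Λ^τ (extended to {−1,1}^{Z^d} by τ outside Λ) as Λ ↑ Z^d. Then μ is reversible for the infinite-volume PCA P, i.e. for every function f : {−1,1}^{Z^d} × {−1,1}^{Z^d} → ℝ which is local in both variables, ∫∫ f(σ,η) P(dσ|η) μ(dη) = ∫∫ f(σ,η) P(dη|σ) μ(dσ). -/

import Mathlib

/-!
The finite-volume chain is reversible: `ν_Λ^τ(a) P_Λ^τ(c | a)` equals `2^{-|Λ|}` times the
exponential of an expression symmetric in `a` and `c`, the only non-obvious part being the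
interaction `Σ_{i,j ∈ Λ} c_i k(i - j) a_j`, which is symmetric because `k` is. Since `k` has
finite range, integrating a local `f(σ, η)` against `P(dσ | η)` gives a local function of `η`,
and once `Λ` contains the locality region this integral is the finite-volume kernel evaluated on
configurations `a_Λ τ_{Λᶜ}`. Hence both sides of the claimed identity are limits of the same
sequence of finite-volume integrals.
-/

open MeasureTheory Filter

namespace PCA

noncomputable section

/-- Sites of the lattice `ℤ^d`. -/
abbrev Site (d : ℕ) := Fin d → ℤ

/-- Spin configurations on `ℤ^d` with spins in `{-1,1}` encoded by `Bool`. -/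
abbrev Conf (d : ℕ) := Site d → Bool

/-- The real value of a spin: `true ↦ 1`, `false ↦ -1`. -/
def val (b : Bool) : ℝ := if b then 1 else -1

/-- Squared Euclidean norm of a site. -/
def normSq {d : ℕ} (i : Site d) : ℤ := ∑ t, (i t) ^ 2

/-- The local field `Σ_j k(i-j) η_j`. -/
def field {d : ℕ} (k : Site d → ℝ) (i : Site d) (η : Conf d) : ℝ :=
  ∑' j : Site d, k (i - j) * val (η j)

/-- Single site updating probability
`p_i(s|η) = (1 + s tanh(β Σ_j k(i-j) η_j + β h))/2`. -/
def pval {d : ℕ} (β h : ℝ) (k : Site d → ℝ) (i : Site d) (s : Bool) (η : Conf d) : ℝ :=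
  (1 + val s * Real.tanh (β * field k i η + β * h)) / 2

/-- The configuration equal to `a` on `Λ` and to `τ` outside `Λ`. -/
def fill {d : ℕ} (Λ : Finset (Site d)) (a : ↥Λ → Bool) (τ : Conf d) : Conf d :=
  fun j => if h : j ∈ Λ then a ⟨j, h⟩ else τ j

/-- Finite volume PCA transition probability with boundary condition `τ`:
`P_Λ^τ(σ|η) = ∏_{i ∈ Λ} p_i(σ_i | η_Λ τ_{Λ^c})`. -/
def Pfin {d : ℕ} (β h : ℝ) (k : Site d → ℝ) (Λ : Finset (Site d)) (τ : Conf d)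
    (σ η : ↥Λ → Bool) : ℝ :=
  ∏ i : ↥Λ, pval β h k i.1 (σ i) (fill Λ η τ)

/-- The boundary field `Σ_{j ∈ Λ^c} k(i-j) τ_j`. -/
def outField {d : ℕ} (k : Site d → ℝ) (Λ : Finset (Site d)) (τ : Conf d) (i : Site d) : ℝ :=
  ∑' j : Site d, if j ∈ Λ then 0 else k (i - j) * val (τ j)

/-- Unnormalized stationary measure of the finite volume PCA:
`∏_{i∈Λ} e^{βhσ_i} cosh(β Σ_j k(i-j) σ̃_j + βh) e^{β σ_i Σ_{j∈Λ^c} k(i-j) τ_j}`. -/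
def nuNum {d : ℕ} (β h : ℝ) (k : Site d → ℝ) (Λ : Finset (Site d)) (τ : Conf d)
    (σ : ↥Λ → Bool) : ℝ :=
  ∏ i : ↥Λ,
    Real.exp (β * h * val (σ i))
      * Real.cosh (β * field k i.1 (fill Λ σ τ) + β * h)
      * Real.exp (β * val (σ i) * outField k Λ τ i.1)

/-- The normalized stationary measure `ν_Λ^τ`. -/
def nu {d : ℕ} (β h : ℝ) (k : Site d → ℝ) (Λ : Finset (Site d)) (τ : Conf d)
    (σ : ↥Λ → Bool) : ℝ :=
  nuNum β h k Λ τ σ / ∑ σ' : ↥Λ → Bool, nuNum β h k Λ τ σ'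


/-- The cylinder set of configurations agreeing with `a` on `Λ`. -/
def cylB {d : ℕ} (Λ : Finset (Site d)) (a : ↥Λ → Bool) : Set (Conf d) :=
  {σ : Conf d | ∀ j : ↥Λ, σ j.1 = a j}

/-- `P` is the (infinite volume) PCA kernel with single site probabilities `pval β h k`:
on every cylinder, `P(·|η)` is the product of the single site probabilities. -/
def IsPCAB {d : ℕ} (β h : ℝ) (k : Site d → ℝ)
    (P : ProbabilityTheory.Kernel (Conf d) (Conf d)) : Prop :=
  ∀ (η : Conf d) (Λ : Finset (Site d)) (a : ↥Λ → Bool),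
    P η (cylB Λ a) = ∏ j : ↥Λ, ENNReal.ofReal (pval β h k j.1 (a j) η)

/-- The Hamiltonian `H_Λ^τ(a) = Σ_{A ∩ Λ ≠ ∅} Φ_A(a_Λ τ_{Λ^c})` for the potential
`Φ_{{i}}(σ) = -βhσ_i`, `Φ_{U_i}(σ) = -log cosh(β Σ_j k(i-j)σ_j + βh)`,
`U_i = {j : k(i-j) ≠ 0}`, and `Φ_A = 0` otherwise. -/
def hamB {d : ℕ} (β h : ℝ) (k : Site d → ℝ) (Λ : Finset (Site d)) (a : ↥Λ → Bool)
    (τ : Conf d) : ℝ :=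
  (∑ i : ↥Λ, -(β * h * val (a i))) +
    ∑' i : Site d,
      Set.indicator {i : Site d | ∃ j ∈ Λ, k (i - j) ≠ 0}
        (fun i => -Real.log (Real.cosh (β * field k i (fill Λ a τ) + β * h))) i

/-- The finite volume Gibbs weight `μ_Λ^τ(a) = exp(-H_Λ^τ(a))/Z_Λ^τ`. -/
def gibbsWB {d : ℕ} (β h : ℝ) (k : Site d → ℝ) (Λ : Finset (Site d)) (a : ↥Λ → Bool)
    (τ : Conf d) : ℝ :=
  Real.exp (-hamB β h k Λ a τ) / ∑ b : ↥Λ → Bool, Real.exp (-hamB β h k Λ b τ)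

/-- The σ-algebra generated by the spins outside `Λ`. -/
def outer {d : ℕ} (Λ : Finset (Site d)) : MeasurableSpace (Conf d) :=
  MeasurableSpace.comap (fun σ (j : {j : Site d // j ∉ Λ}) => σ j.1) MeasurableSpace.pi

/-- `μ` is a Gibbs measure for the potential associated to `β`, `h`, `k` (DLR equations):
for every finite `Λ`, conditionally on the configuration outside `Λ`, the configuration
on `Λ` is distributed according to the finite volume Gibbs measure. -/
def IsGibbsB {d : ℕ} (β h : ℝ) (k : Site d → ℝ) (μ : Measure (Conf d)) : Prop :=
  ∀ (Λ : Finset (Site d)) (a : ↥Λ → Bool) (B : Set (Conf d)),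
    MeasurableSet[outer Λ] B →
    μ (cylB Λ a ∩ B) = ∫⁻ τ in B, ENNReal.ofReal (gibbsWB β h k Λ a τ) ∂μ

/-- The centered hypercube `[-n,n]^d ∩ ℤ^d`. -/
def boxCc {d : ℕ} (n : ℕ) : Finset (Site d) :=
  Fintype.piFinset fun _ => Finset.Icc (-(n : ℤ)) (n : ℤ)

/-- A local function on configuration space: it depends on finitely many spins. -/
def LocalFun {d : ℕ} (f : Conf d → ℝ) : Prop :=
  ∃ Δ : Finset (Site d), ∀ σ σ' : Conf d, (∀ j ∈ Δ, σ j = σ' j) → f σ = f σ'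

/-- The finite volume stationary measure `ν_Λ^τ` viewed as a probability measure on the
whole configuration space, extending configurations by `τ` outside `Λ`. -/
def nuMeas {d : ℕ} (β h : ℝ) (k : Site d → ℝ) (Λ : Finset (Site d)) (τ : Conf d) :
    Measure (Conf d) :=
  ∑ a : ↥Λ → Bool, ENNReal.ofReal (nu β h k Λ τ a) • Measure.dirac (fill Λ a τ)

open Function ProbabilityTheory

variable {d : ℕ}

@[simp] lemma val_true : val true = 1 := rfl

@[simp] lemma val_false : val false = -1 := rfl

lemma finite_support_of_normSq_gt {k : Site d → ℝ} {R : ℝ}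
    (hrange : ∀ i : Site d, R ^ 2 < (normSq i : ℝ) → k i = 0) : (support k).Finite := by
  refine (boxCc (d := d) ⌈R ^ 2⌉₊).finite_toSet.subset fun i hi => ?_
  have hnorm : normSq i ≤ (⌈R ^ 2⌉₊ : ℤ) := by
    have : (normSq i : ℝ) ≤ ⌈R ^ 2⌉₊ := (not_lt.1 (mt (hrange i) hi)).trans (Nat.le_ceil _)
    exact_mod_cast this
  simp only [boxCc, Fintype.coe_piFinset, Set.mem_pi, Set.mem_univ, Finset.coe_Icc,
    Set.mem_Icc, forall_const]
  intro t
  have hcoord : |i t| ≤ normSq i := calc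
    |i t| ≤ i t ^ 2 := by rw [Int.abs_eq_natAbs]; exact Int.natAbs_le_self_sq _
    _ ≤ normSq i := Finset.single_le_sum (f := fun s => i s ^ 2)
      (fun s _ => sq_nonneg _) (Finset.mem_univ t)
  exact abs_le.1 (hcoord.trans hnorm)

lemma finite_setOf_sub_ne_zero {k : Site d → ℝ} (hk : (support k).Finite) (i : Site d) :
    {j | k (i - j) ≠ 0}.Finite :=
  hk.preimage sub_right_injective.injOn

lemma dependsOn_field (k : Site d → ℝ) (i : Site d) :
    DependsOn (field k i) {j | k (i - j) ≠ 0} := fun η η' hη =>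
  tsum_congr fun j => by
    by_cases hj : k (i - j) = 0
    · simp [hj]
    · rw [hη j hj]

lemma field_fill {k : Site d → ℝ} (hk : (support k).Finite) (Λ : Finset (Site d))
    (a : ↥Λ → Bool) (τ : Conf d) (i : Site d) :
    field k i (fill Λ a τ) = ∑ j : ↥Λ, k (i - j) * val (a j) + outField k Λ τ i := by
  set F : Site d → ℝ := fun j => k (i - j) * val (fill Λ a τ j)
  have hsplit : ∀ j, F j = (if j ∈ Λ then F j else 0)
      + (if j ∈ Λ then 0 else k (i - j) * val (τ j)) := fun j => by
    by_cases hj : j ∈ Λ <;> simp [F, fill, hj]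
  have hin : Summable fun j => if j ∈ Λ then F j else 0 :=
    summable_of_ne_finset_zero fun j hj => if_neg hj
  have hout : Summable fun j => if j ∈ Λ then 0 else k (i - j) * val (τ j) :=
    summable_of_hasFiniteSupport <| (finite_setOf_sub_ne_zero hk i).subset fun j hj h0 =>
      hj (by simp [h0])
  rw [field, tsum_congr hsplit, hin.tsum_add hout, outField,
    tsum_eq_sum fun j hj => if_neg hj, ← Finset.sum_coe_sort Λ]
  congr 1
  exact Finset.sum_congr rfl fun j _ => by simp [F, fill]

lemma dependsOn_pval (β h : ℝ) (k : Site d → ℝ) (i : Site d) (s : Bool) :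
    DependsOn (pval β h k i s) {j | k (i - j) ≠ 0} := fun η η' hη => by
  rw [pval, pval, dependsOn_field k i hη]

lemma one_add_val_mul_tanh_div_two (s : Bool) (x : ℝ) :
    (1 + val s * Real.tanh x) / 2 = Real.exp (val s * x) / (2 * Real.cosh x) := by
  have hc : Real.cosh x ≠ 0 := (Real.cosh_pos x).ne'
  cases s
  · rw [val_false, neg_one_mul, neg_one_mul, ← Real.cosh_sub_sinh, Real.tanh_eq_sinh_div_cosh]
    field_simp
    ring
  · rw [val_true, one_mul, one_mul, ← Real.cosh_add_sinh, Real.tanh_eq_sinh_div_cosh]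
    field_simp

lemma pval_eq_exp_div_cosh (β h : ℝ) (k : Site d → ℝ) (i : Site d) (s : Bool) (η : Conf d) :
    pval β h k i s η = Real.exp (val s * (β * field k i η + β * h))
      / (2 * Real.cosh (β * field k i η + β * h)) :=
  one_add_val_mul_tanh_div_two s _

lemma pval_nonneg (β h : ℝ) (k : Site d → ℝ) (i : Site d) (s : Bool) (η : Conf d) :
    0 ≤ pval β h k i s η := by
  rw [pval_eq_exp_div_cosh]
  positivity

lemma nu_nonneg (β h : ℝ) (k : Site d → ℝ) (Λ : Finset (Site d)) (τ : Conf d)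
    (σ : ↥Λ → Bool) : 0 ≤ nu β h k Λ τ σ := by
  unfold nu nuNum
  positivity

lemma localFun_of_dependsOn {f : Conf d → ℝ} {s : Set (Site d)} (hs : s.Finite)
    (hf : DependsOn f s) : LocalFun f :=
  ⟨hs.toFinset, fun _ _ hσ => hf fun j hj => hσ j (hs.mem_toFinset.2 hj)⟩

lemma fill_restrict_of_mem (Λ : Finset (Site d)) (σ τ : Conf d) {j : Site d} (hj : j ∈ Λ) :
    fill Λ (Λ.restrict σ) τ j = σ j := by
  simp [fill, hj]

lemma cylB_eq_preimage_restrict (Λ : Finset (Site d)) (a : ↥Λ → Bool) :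
    cylB Λ a = (Λ.restrict : Conf d → ↥Λ → Bool) ⁻¹' {a} := by
  ext σ
  simp [cylB, funext_iff]

lemma integral_eq_sum_cylB (m : Measure (Conf d)) [IsFiniteMeasure m] (Λ : Finset (Site d))
    (τ : Conf d) {F : Conf d → ℝ} (hF : DependsOn F Λ) :
    ∫ σ, F σ ∂m = ∑ a : ↥Λ → Bool, m.real (cylB Λ a) * F (fill Λ a τ) := by
  have hrestrict : Measurable (Λ.restrict : Conf d → ↥Λ → Bool) := Finset.measurable_restrict _
  calc ∫ σ, F σ ∂m = ∫ σ, F (fill Λ (Λ.restrict σ) τ) ∂m :=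
        integral_congr_ae (.of_forall fun σ =>
          hF fun j hj => (fill_restrict_of_mem Λ σ τ hj).symm)
    _ = ∫ a, F (fill Λ a τ) ∂(m.map Λ.restrict) :=
        (integral_map (f := fun a => F (fill Λ a τ)) hrestrict.aemeasurable
          (measurable_of_finite _).aestronglyMeasurable).symm
    _ = ∑ a : ↥Λ → Bool, m.real (cylB Λ a) * F (fill Λ a τ) := by
        rw [integral_fintype (.of_finite)]
        simp_rw [map_measureReal_apply hrestrict (measurableSet_singleton _),
          cylB_eq_preimage_restrict, smul_eq_mul]

lemma IsPCAB.integral_eq_sum {β h : ℝ} {k : Site d → ℝ} {P : Kernel (Conf d) (Conf d)}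
    [IsMarkovKernel P] (hP : IsPCAB β h k P) (Λ : Finset (Site d)) (τ : Conf d)
    {F : Conf d → ℝ} (hF : DependsOn F Λ) (η : Conf d) :
    ∫ σ, F σ ∂(P η) = ∑ a : ↥Λ → Bool, (∏ j : ↥Λ, pval β h k j (a j) η) * F (fill Λ a τ) := by
  rw [integral_eq_sum_cylB (P η) Λ τ hF]
  refine Finset.sum_congr rfl fun a _ => ?_
  rw [measureReal_def, hP, ENNReal.toReal_prod]
  simp_rw [ENNReal.toReal_ofReal (pval_nonneg _ _ _ _ _ _)]

lemma integral_nuMeas (β h : ℝ) (k : Site d → ℝ) (Λ : Finset (Site d)) (τ : Conf d)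
    (F : Conf d → ℝ) :
    ∫ σ, F σ ∂(nuMeas β h k Λ τ) = ∑ a : ↥Λ → Bool, nu β h k Λ τ a * F (fill Λ a τ) := by
  rw [nuMeas, integral_finsetSum_measure fun a _ =>
    (integrable_dirac enorm_lt_top).smul_measure ENNReal.ofReal_ne_top]
  refine Finset.sum_congr rfl fun a _ => ?_
  rw [integral_smul_measure, integral_dirac, ENNReal.toReal_ofReal (nu_nonneg _ _ _ _ _ _),
    smul_eq_mul]

lemma nuNum_mul_Pfin {k : Site d → ℝ} (hk : (support k).Finite) (β h : ℝ)
    (Λ : Finset (Site d)) (τ : Conf d) (a c : ↥Λ → Bool) :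
    nuNum β h k Λ τ a * Pfin β h k Λ τ c a
      = Real.exp (∑ i : ↥Λ, (β * h * (val (a i) + val (c i))
          + β * (val (a i) + val (c i)) * outField k Λ τ i
          + β * val (c i) * ∑ j : ↥Λ, k (i - j) * val (a j))) / 2 ^ Fintype.card Λ := by
  rw [Real.exp_sum, ← Finset.card_univ, ← Finset.prod_const, ← Finset.prod_div_distrib, nuNum,
    Pfin, ← Finset.prod_mul_distrib]
  refine Finset.prod_congr rfl fun i _ => ?_
  rw [pval_eq_exp_div_cosh, field_fill hk]
  set x := β * (∑ j : ↥Λ, k (i - j) * val (a j) + outField k Λ τ i) + β * h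
  have hc := (Real.cosh_pos x).ne'
  rw [show β * h * (val (a i) + val (c i)) + β * (val (a i) + val (c i)) * outField k Λ τ i
      + β * val (c i) * ∑ j : ↥Λ, k (i - j) * val (a j)
      = β * h * val (a i) + β * val (a i) * outField k Λ τ i + val (c i) * x by ring,
    Real.exp_add, Real.exp_add]
  field_simp

lemma nu_mul_Pfin_comm {k : Site d → ℝ} (hk : (support k).Finite)
    (hsym : ∀ i : Site d, k (-i) = k i) (β h : ℝ) (Λ : Finset (Site d)) (τ : Conf d)
    (a c : ↥Λ → Bool) :
    nu β h k Λ τ a * Pfin β h k Λ τ c a = nu β h k Λ τ c * Pfin β h k Λ τ a c := by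
  have hquad : ∑ i : ↥Λ, β * val (c i) * ∑ j : ↥Λ, k (i - j) * val (a j)
      = ∑ i : ↥Λ, β * val (a i) * ∑ j : ↥Λ, k (i - j) * val (c j) := by
    simp only [Finset.mul_sum]
    rw [Finset.sum_comm]
    refine Finset.sum_congr rfl fun i _ => Finset.sum_congr rfl fun j _ => ?_
    rw [← neg_sub, hsym]
    ring
  rw [nu, nu, div_mul_eq_mul_div, div_mul_eq_mul_div, nuNum_mul_Pfin hk, nuNum_mul_Pfin hk]
  congr 3
  simp only [mul_add, add_mul, Finset.sum_add_distrib, hquad]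
  ring

lemma sum_mul_sum_swap_of_balance {α : Type*} [Fintype α] {w : α → ℝ} {p : α → α → ℝ}
    (hbal : ∀ a c, w a * p c a = w c * p a c) (f : α → α → ℝ) :
    ∑ a, w a * ∑ c, p c a * f c a = ∑ a, w a * ∑ c, p c a * f a c := by
  calc ∑ a, w a * ∑ c, p c a * f c a = ∑ a, ∑ c, w c * p a c * f c a :=
        Finset.sum_congr rfl fun a _ => by
          rw [Finset.mul_sum]
          exact Finset.sum_congr rfl fun c _ => by rw [← mul_assoc, hbal]
    _ = ∑ a, w a * ∑ c, p c a * f a c := by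
        rw [Finset.sum_comm]
        simp only [Finset.mul_sum, mul_assoc]

lemma IsPCAB.integral_nuMeas_comm {β h : ℝ} {k : Site d → ℝ} {P : Kernel (Conf d) (Conf d)}
    [IsMarkovKernel P] (hP : IsPCAB β h k P) (hk : (support k).Finite)
    (hsym : ∀ i : Site d, k (-i) = k i) (Λ : Finset (Site d)) (τ : Conf d)
    {f : Conf d → Conf d → ℝ} (hf₁ : ∀ η, DependsOn (f · η) Λ)
    (hf₂ : ∀ σ, DependsOn (f σ ·) Λ) :
    ∫ η, ∫ σ, f σ η ∂(P η) ∂(nuMeas β h k Λ τ)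
      = ∫ σ, ∫ η, f σ η ∂(P σ) ∂(nuMeas β h k Λ τ) := by
  simp only [integral_nuMeas, hP.integral_eq_sum Λ τ (hf₁ _), hP.integral_eq_sum Λ τ (hf₂ _)]
  exact sum_mul_sum_swap_of_balance (nu_mul_Pfin_comm hk hsym β h Λ τ) _

lemma IsPCAB.localFun_integral {β h : ℝ} {k : Site d → ℝ} {P : Kernel (Conf d) (Conf d)}
    [IsMarkovKernel P] (hP : IsPCAB β h k P) (hk : (support k).Finite)
    {f : Conf d → Conf d → ℝ} {Δ : Finset (Site d)} (hf₁ : ∀ η, DependsOn (f · η) Δ)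
    (hf₂ : ∀ σ, DependsOn (f σ ·) Δ) :
    LocalFun fun η => ∫ σ, f σ η ∂(P η) := by
  refine localFun_of_dependsOn (s := ↑Δ ∪ ⋃ i ∈ Δ, {j | k (i - j) ≠ 0})
    (Δ.finite_toSet.union (Δ.finite_toSet.biUnion fun i _ => finite_setOf_sub_ne_zero hk i))
    fun η η' hη => ?_
  rw [hP.integral_eq_sum Δ η (hf₁ η), hP.integral_eq_sum Δ η (hf₁ η')]
  refine Finset.sum_congr rfl fun a _ => ?_
  congr 1
  · exact Finset.prod_congr rfl fun j _ => dependsOn_pval β h k j (a j)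
      fun x hx => hη x (Set.mem_union_right _ (Set.mem_biUnion j.2 hx))
  · exact hf₂ _ fun x hx => hη x (Set.mem_union_left _ hx)

lemma eventually_subset_boxCc (Δ : Finset (Site d)) : ∀ᶠ n in atTop, Δ ⊆ boxCc n := by
  have hmem : ∀ i ∈ Δ, ∀ᶠ n : ℕ in atTop, i ∈ boxCc n := fun i _ => by
    simp only [boxCc, Fintype.mem_piFinset, Finset.mem_Icc, ← abs_le]
    exact eventually_all.2 fun t => (eventually_ge_atTop (i t).natAbs).mono fun n hn => by
      rw [Int.abs_eq_natAbs]
      exact_mod_cast hn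
  exact ((eventually_all_finset Δ).2 hmem).mono fun n hn i hi => hn i hi

theorem stmt7_general {d : ℕ} (β h R : ℝ)
    (k : Site d → ℝ) (hsym : ∀ i : Site d, k (-i) = k i)
    (hrange : ∀ i : Site d, R ^ 2 < (normSq i : ℝ) → k i = 0)
    (τ : Conf d)
    (μ : Measure (Conf d))
    (φ : ℕ → ℕ) (hφ : StrictMono φ)
    (hlim : ∀ f : Conf d → ℝ, LocalFun f →
      Tendsto (fun n => ∫ σ, f σ ∂(nuMeas β h k (boxCc (φ n)) τ)) atTop
        (nhds (∫ σ, f σ ∂μ)))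
    (P : ProbabilityTheory.Kernel (Conf d) (Conf d)) [ProbabilityTheory.IsMarkovKernel P]
    (hP : IsPCAB β h k P) :
    ∀ f : Conf d × Conf d → ℝ,
      (∃ Δ : Finset (Site d), ∀ σ η σ' η' : Conf d,
        (∀ j ∈ Δ, σ j = σ' j) → (∀ j ∈ Δ, η j = η' j) → f (σ, η) = f (σ', η')) →
      ∫ η, ∫ σ, f (σ, η) ∂(P η) ∂μ = ∫ σ, ∫ η, f (σ, η) ∂(P σ) ∂μ := by
  rintro f ⟨Δ, hf⟩
  have hk := finite_support_of_normSq_gt hrange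
  have hf₁ : ∀ η, DependsOn (fun σ => f (σ, η)) Δ := fun _ _ _ hσ =>
    hf _ _ _ _ hσ fun _ _ => rfl
  have hf₂ : ∀ σ, DependsOn (fun η => f (σ, η)) Δ := fun _ _ _ hη =>
    hf _ _ _ _ (fun _ _ => rfl) hη
  have hbal : ∀ᶠ n in atTop,
      ∫ η, ∫ σ, f (σ, η) ∂(P η) ∂(nuMeas β h k (boxCc (φ n)) τ)
        = ∫ σ, ∫ η, f (σ, η) ∂(P σ) ∂(nuMeas β h k (boxCc (φ n)) τ) :=
    (hφ.tendsto_atTop.eventually (eventually_subset_boxCc Δ)).mono fun n hn =>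
      hP.integral_nuMeas_comm hk hsym _ τ (fun η => (hf₁ η).mono (Finset.coe_subset.2 hn))
        (fun σ => (hf₂ σ).mono (Finset.coe_subset.2 hn))
  exact tendsto_nhds_unique ((hlim _ (hP.localFun_integral hk hf₁ hf₂)).congr' hbal)
    (hlim _ (hP.localFun_integral (f := fun η σ => f (σ, η)) hk hf₂ hf₁))

/-- Any weak limit point `μ` of the finite volume stationary measures
`ν_Λ^τ` as `Λ ↑ ℤ^d` (along hypercubes) is reversible for the infinite volume PCA:
`∫∫ f(σ,η) P(dσ|η) μ(dη) = ∫∫ f(σ,η) P(dη|σ) μ(dσ)` for every `f` local in both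
variables. -/
theorem stmt7 {d : ℕ} (hd : 0 < d) (β h R : ℝ) (hβ : 0 < β) (hR : 0 < R)
    (k : Site d → ℝ) (hsym : ∀ i : Site d, k (-i) = k i)
    (hrange : ∀ i : Site d, R ^ 2 < (normSq i : ℝ) → k i = 0)
    (τ : Conf d)
    (μ : Measure (Conf d)) [IsProbabilityMeasure μ]
    (φ : ℕ → ℕ) (hφ : StrictMono φ)
    (hlim : ∀ f : Conf d → ℝ, LocalFun f →
      Tendsto (fun n => ∫ σ, f σ ∂(nuMeas β h k (boxCc (φ n)) τ)) atTop
        (nhds (∫ σ, f σ ∂μ)))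
    (P : ProbabilityTheory.Kernel (Conf d) (Conf d)) [ProbabilityTheory.IsMarkovKernel P]
    (hP : IsPCAB β h k P) :
    ∀ f : Conf d × Conf d → ℝ,
      (∃ Δ : Finset (Site d), ∀ σ η σ' η' : Conf d,
        (∀ j ∈ Δ, σ j = σ' j) → (∀ j ∈ Δ, η j = η' j) → f (σ, η) = f (σ', η')) →
      ∫ η, ∫ σ, f (σ, η) ∂(P η) ∂μ = ∫ σ, ∫ η, f (σ, η) ∂(P σ) ∂μ :=
  stmt7_general β h R k hsym hrange τ μ φ hφ hlim P hP

end
end PCA
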